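/- arXiv:2006.03142 — 2 statements merged into one kernel-verified Lean document; each statement's English description precedes it below -/
import Mathlib

section
/- Let x be a decision node and i a buyer. If κ_i(x) < t then μ_i(x + e_{−i}) = μ_i(x), and if κ_i(x) = t then μ_i(x + e_{−i}) < μ_i(x). Moreover, if κ_i(x) > 0 then μ_i(x + e_i) ≥ μ_i(x) − v_i(1|x) + β_i(x). -/
open Finset

noncomputable section

/-- The opponent of buyer `i`. -/
def other (i : Fin 2) : Fin 2 := 1 - i

/-- The standard unit vector of buyer `i`: winning one item moves `x` to `x + e i`. -/
def e (i : Fin 2) : Fin 2 → ℕ := Pi.single i 1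

/-- Remaining supply `t(x) = T - x₁ - x₂` at node `x`. -/
def supply (T : ℕ) (x : Fin 2 → ℕ) : ℕ := T - (x 0 + x 1)

/-- `x` is a decision node: `x₁ + x₂ < T`. -/
def IsDecision (T : ℕ) (x : Fin 2 → ℕ) : Prop := x 0 + x 1 < T

/-- Incremental value `v_i(k|x) = v_i(x_i + k)`. -/
def val (v : Fin 2 → ℕ → ℝ) (i : Fin 2) (k : ℕ) (x : Fin 2 → ℕ) : ℝ := v i (x i + k)

/-- Valuations are nonnegative and weakly decreasing. -/
def Admissible (v : Fin 2 → ℕ → ℝ) : Prop := ∀ i k, 0 ≤ v i k ∧ v i (k + 1) ≤ v i k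

/-- Greedy payoff `μ̄_i(k|x) = Σ_{j=1}^k v_i(j|x) - k · v_{-i}(t-k+1|x)`. -/
def gbar (T : ℕ) (v : Fin 2 → ℕ → ℝ) (i : Fin 2) (k : ℕ) (x : Fin 2 → ℕ) : ℝ :=
  (∑ j ∈ Finset.Icc 1 k, val v i j x) - (k : ℝ) * val v (other i) (supply T x - k + 1) x

/-- Greedy utility `μ_i(x) = max_{0 ≤ k ≤ t} μ̄_i(k|x)` (equal to `0` at terminal nodes). -/
def gu (T : ℕ) (v : Fin 2 → ℕ → ℝ) (i : Fin 2) (x : Fin 2 → ℕ) : ℝ :=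
  Finset.sup' (Finset.range (supply T x + 1)) ⟨0, Finset.mem_range.mpr (Nat.succ_pos _)⟩
    (fun k => gbar T v i k x)

/-- Greedy demand `κ_i(x)`: the least `k ∈ {0,…,t}` attaining the greedy utility. -/
def gd (T : ℕ) (v : Fin 2 → ℕ → ℝ) (i : Fin 2) (x : Fin 2 → ℕ) : ℕ :=
  sInf {k | k ≤ supply T x ∧ gbar T v i k x = gu T v i x}

/-- Duopsony factor `f_i(x) = max ({k ∈ {1,…,t} : v_i(k|x) > v_{-i}(t-k+1|x)} ∪ {0})`. -/
def df (T : ℕ) (v : Fin 2 → ℕ → ℝ) (i : Fin 2) (x : Fin 2 → ℕ) : ℕ :=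
  sSup {k | 1 ≤ k ∧ k ≤ supply T x ∧
    val v (other i) (supply T x - k + 1) x < val v i k x}

/-- Baseline price `β_i(x)`. -/
def base (T : ℕ) (v : Fin 2 → ℕ → ℝ) (i : Fin 2) (x : Fin 2 → ℕ) : ℝ :=
  if df T v i x = 0 then val v i 1 x
  else val v (other i) (supply T x - gd T v i x + 1) x

/-- Threshold price `p_i(x) = v_i(1|x) + μ_i(x+e_i) - μ_i(x+e_{-i})`. -/
def tp (T : ℕ) (v : Fin 2 → ℕ → ℝ) (i : Fin 2) (x : Fin 2 → ℕ) : ℝ :=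
  val v i 1 x + gu T v i (x + e i) - gu T v i (x + e (other i))

/-
When the opponent wins an item, buyer `i`'s values are untouched and the opponent's price
`v_{-i}(t-k+1)` is read off at the same absolute index, so every greedy payoff `μ̄_i(k|·)` with
`k < t` survives unchanged and only the option `k = t` disappears: the greedy utility stays put
unless the least maximiser was `κ = t`, in which case it strictly drops. When buyer `i` wins an
item, the option `κ - 1` at the new node is worth exactly `μ_i(x) - v_i(1|x) + v_{-i}(t-κ+1|x)`.
Since going from `κ - 1` to `κ` strictly pays off at `x`, monotonicity of `v_{-i}` gives
`v_i(κ|x) > v_{-i}(t-κ+1|x)`, so `f_i(x) ≥ κ > 0` and that last term is the baseline price.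
-/

lemma other_ne (i : Fin 2) : other i ≠ i := by
  fin_cases i <;> decide

lemma add_e_apply_self (x : Fin 2 → ℕ) (i : Fin 2) : (x + e i) i = x i + 1 := by
  simp [e]

lemma add_e_apply_of_ne (x : Fin 2 → ℕ) {i j : Fin 2} (h : j ≠ i) : (x + e i) j = x j := by
  simp [e, h]

lemma supply_add_e (T : ℕ) (x : Fin 2 → ℕ) (i : Fin 2) :
    supply T (x + e i) = supply T x - 1 := by
  have h : (x + e i) 0 + (x + e i) 1 = x 0 + x 1 + 1 := by
    fin_cases i <;> simp [e] <;> omega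
  unfold supply
  omega

lemma val_add_e_self (v : Fin 2 → ℕ → ℝ) (i : Fin 2) (k : ℕ) (x : Fin 2 → ℕ) :
    val v i k (x + e i) = val v i (k + 1) x := by
  rw [_root_.val, _root_.val, add_e_apply_self, add_right_comm, add_assoc]

lemma val_add_e_of_ne (v : Fin 2 → ℕ → ℝ) {i j : Fin 2} (h : j ≠ i) (k : ℕ)
    (x : Fin 2 → ℕ) :
    val v j k (x + e i) = val v j k x := by
  simp only [_root_.val, add_e_apply_of_ne x h]

lemma sum_Icc_one_eq_sum_range {M : Type*} [AddCommMonoid M] (f : ℕ → M) (k : ℕ) :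
    ∑ j ∈ Icc 1 k, f j = ∑ j ∈ range k, f (j + 1) := by
  rw [← Ico_add_one_right_eq_Icc, sum_Ico_eq_sum_range, Nat.add_sub_cancel]
  simp only [add_comm 1]

lemma gbar_eq_sum_range (T : ℕ) (v : Fin 2 → ℕ → ℝ) (i : Fin 2) (k : ℕ)
    (x : Fin 2 → ℕ) :
    gbar T v i k x =
      ∑ j ∈ range k, val v i (j + 1) x - k * val v (other i) (supply T x - k + 1) x := by
  rw [gbar, sum_Icc_one_eq_sum_range]

section Greedy

variable {T : ℕ} {v : Fin 2 → ℕ → ℝ} {i : Fin 2} {x : Fin 2 → ℕ}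

lemma gbar_le_gu {k : ℕ} (hk : k ≤ supply T x) : gbar T v i k x ≤ gu T v i x :=
  le_sup' (fun k => gbar T v i k x) (mem_range.mpr (Nat.lt_succ_of_le hk))

lemma gd_mem : gd T v i x ≤ supply T x ∧ gbar T v i (gd T v i x) x = gu T v i x := by
  obtain ⟨k, hk, hk_eq⟩ := exists_mem_eq_sup' nonempty_range_add_one (fun k => gbar T v i k x)
  exact Nat.sInf_mem (s := {k | k ≤ supply T x ∧ gbar T v i k x = gu T v i x})
    ⟨k, Nat.lt_succ_iff.mp (mem_range.mp hk), hk_eq.symm⟩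

lemma gbar_lt_gu_of_lt_gd {k : ℕ} (hk : k < gd T v i x) : gbar T v i k x < gu T v i x := by
  have hkt : k ≤ supply T x := hk.le.trans gd_mem.1
  refine (gbar_le_gu hkt).lt_of_ne fun h => ?_
  exact (Nat.sInf_le ⟨hkt, h⟩ : gd T v i x ≤ k).not_gt hk

lemma gbar_add_e_other {k : ℕ} (hk : k < supply T x) :
    gbar T v i k (x + e (other i)) = gbar T v i k x := by
  simp only [gbar, supply_add_e, val_add_e_self, val_add_e_of_ne v (other_ne i).symm]
  congr 4
  omega

lemma gu_add_e_other (h : (range (supply T x)).Nonempty) :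
    gu T v i (x + e (other i)) = (range (supply T x)).sup' h (fun k => gbar T v i k x) := by
  have ht : supply T x - 1 + 1 = supply T x := by
    have := nonempty_range_iff.mp h
    omega
  simp only [gu, supply_add_e, ht]
  exact sup'_congr _ rfl fun k hk => gbar_add_e_other (mem_range.mp hk)

lemma gu_add_e_other_eq_of_gd_lt (h : gd T v i x < supply T x) :
    gu T v i (x + e (other i)) = gu T v i x := by
  rw [gu_add_e_other (nonempty_range_iff.mpr (by omega))]
  refine le_antisymm (sup'_le _ _ fun k hk => gbar_le_gu (mem_range.mp hk).le) ?_
  exact gd_mem.2 ▸ le_sup' (fun k => gbar T v i k x) (mem_range.mpr h)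

lemma gu_add_e_other_lt_of_gd_eq (hx : IsDecision T x) (h : gd T v i x = supply T x) :
    gu T v i (x + e (other i)) < gu T v i x := by
  have ht : 0 < supply T x := by
    unfold IsDecision at hx
    unfold supply
    omega
  rw [gu_add_e_other (nonempty_range_iff.mpr ht.ne'), sup'_lt_iff]
  exact fun k hk => gbar_lt_gu_of_lt_gd (h ▸ mem_range.mp hk)

lemma gbar_pred_add_e_self {k : ℕ} (hk : 0 < k) (hkt : k ≤ supply T x) :
    gbar T v i (k - 1) (x + e i) =
      gbar T v i k x - val v i 1 x + val v (other i) (supply T x - k + 1) x := by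
  obtain ⟨n, rfl⟩ : ∃ n, k = n + 1 := ⟨k - 1, by omega⟩
  have hidx : supply T x - 1 - n = supply T x - (n + 1) := by omega
  simp only [gbar_eq_sum_range, supply_add_e, val_add_e_self, val_add_e_of_ne v (other_ne i),
    sum_range_succ' (fun j => val v i (j + 1) x), Nat.add_sub_cancel, hidx]
  push_cast
  ring

/- `μ̄_i(k|x) - μ̄_i(k-1|x) ≤ v_i(k|x) - v_{-i}(t-k+1|x)`, because the price paid on each
of the first `k - 1` items rises from `v_{-i}(t-k+2|x)` to `v_{-i}(t-k+1|x)`. -/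
lemma val_other_lt_of_gbar_pred_lt (hv : Admissible v) {k : ℕ} (hk : 0 < k)
    (hkt : k ≤ supply T x) (h : gbar T v i (k - 1) x < gbar T v i k x) :
    val v (other i) (supply T x - k + 1) x < val v i k x := by
  obtain ⟨n, rfl⟩ : ∃ n, k = n + 1 := ⟨k - 1, by omega⟩
  have hidx : supply T x - n + 1 = supply T x - (n + 1) + 1 + 1 := by omega
  have hdec : val v (other i) (supply T x - (n + 1) + 1 + 1) x ≤
      val v (other i) (supply T x - (n + 1) + 1) x := (hv _ _).2
  simp only [gbar_eq_sum_range, sum_range_succ, Nat.add_sub_cancel, hidx] at h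
  push_cast at h
  nlinarith [mul_le_mul_of_nonneg_left hdec (Nat.cast_nonneg n : (0 : ℝ) ≤ n)]

lemma le_df {k : ℕ} (hk : 0 < k) (hkt : k ≤ supply T x)
    (h : val v (other i) (supply T x - k + 1) x < val v i k x) : k ≤ df T v i x :=
  le_csSup (⟨supply T x, fun _ hj => hj.2.1⟩ : BddAbove _) ⟨hk, hkt, h⟩

lemma base_eq_of_gd_pos (hv : Admissible v) (hκ : 0 < gd T v i x) :
    base T v i x = val v (other i) (supply T x - gd T v i x + 1) x := by
  have hmarginal := val_other_lt_of_gbar_pred_lt hv hκ gd_mem.1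
    (gd_mem.2 ▸ gbar_lt_gu_of_lt_gd (Nat.sub_lt hκ one_pos))
  exact if_neg (hκ.trans_le (le_df hκ gd_mem.1 hmarginal)).ne'

end Greedy

/-- Evolution of the greedy utility. -/
theorem stmt3 (T : ℕ) (v : Fin 2 → ℕ → ℝ) (hv : Admissible v)
    (x : Fin 2 → ℕ) (hx : IsDecision T x) (i : Fin 2) :
    (gd T v i x < supply T x → gu T v i (x + e (other i)) = gu T v i x) ∧
    (gd T v i x = supply T x → gu T v i (x + e (other i)) < gu T v i x) ∧
    (0 < gd T v i x →
      gu T v i (x + e i) ≥ gu T v i x - val v i 1 x + base T v i x) := by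
  refine ⟨gu_add_e_other_eq_of_gd_lt, gu_add_e_other_lt_of_gd_eq hx, fun hκ => ?_⟩
  have hκt : gd T v i x ≤ supply T x := gd_mem.1
  calc gu T v i x - val v i 1 x + base T v i x
      = gbar T v i (gd T v i x - 1) (x + e i) := by
        rw [base_eq_of_gd_pos hv hκ, gbar_pred_add_e_self hκ hκt, gd_mem.2]
    _ ≤ gu T v i (x + e i) := gbar_le_gu (by rw [supply_add_e]; omega)
end
end

section
/- Declining price anomaly: in the no-overbidding equilibrium with any tie-breaking rule, prices are non-increasing along any realized equilibrium path. Formally, for every decision node x with remaining supply t > 1 and every buyer j, if buyer j wins at x with positive probability (q_j(x) > 0), then p(x) ≥ p(x + e_j). -/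
open Finset

noncomputable section

/-- A tie-breaking rule: probabilities assigned to the two buyers at each decision node. -/
def TieBreaking (T : ℕ) (π : Fin 2 → (Fin 2 → ℕ) → ℝ) : Prop :=
  ∀ x : Fin 2 → ℕ, IsDecision T x →
    (∀ i, 0 ≤ π i x ∧ π i x ≤ 1) ∧ π 0 x + π 1 x = 1

/-- The no-overbidding equilibrium for the tie-breaking rule `π`, described by its
forward utilities `u`, bids `b` and winning probabilities `q`, which satisfy the
defining backward recursion. -/
structure Equilibrium (T : ℕ) (v : Fin 2 → ℕ → ℝ) (π : Fin 2 → (Fin 2 → ℕ) → ℝ) where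
  u : Fin 2 → (Fin 2 → ℕ) → ℝ
  b : Fin 2 → (Fin 2 → ℕ) → ℝ
  q : Fin 2 → (Fin 2 → ℕ) → ℝ
  u_terminal : ∀ i x, ¬ IsDecision T x → u i x = 0
  bid_def : ∀ i x, IsDecision T x →
    b i x = min (val v i 1 x) (val v i 1 x + u i (x + e i) - u i (x + e (other i)))
  q_win : ∀ i x, IsDecision T x → b (other i) x < b i x → q i x = 1
  q_lose : ∀ i x, IsDecision T x → b i x < b (other i) x → q i x = 0
  q_tie : ∀ i x, IsDecision T x → b i x = b (other i) x → q i x = π i x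
  u_def : ∀ i x, IsDecision T x →
    u i x = q i x * (val v i 1 x - b (other i) x + u i (x + e i))
            + (1 - q i x) * u i (x + e (other i))

/-- The price paid at node `x`: the lower of the two bids. -/
def price {T : ℕ} {v : Fin 2 → ℕ → ℝ} {π : Fin 2 → (Fin 2 → ℕ) → ℝ}
    (E : Equilibrium T v π) (x : Fin 2 → ℕ) : ℝ := min (E.b 0 x) (E.b 1 x)


/-!
If buyer `j` wins at `x` with positive probability, then `p(x) = b_o(x)` for the other buyer `o`,
so it suffices to bound `p(x + e_j)` by both terms of the minimum defining `b_o(x)`. The first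
term `v_o(1|x)` is unchanged by `j`'s win and no bid exceeds it. For the second, two facts about
the recursion do the work: the price at any node `y` is at most `v_o(1|y) + u_o(y + e_o) - u_o(y)`,
and a buyer's utility never increases when the opponent wins. Applied at `y = x + e_j` and at
`x + e_o`, they give `p(x + e_j) ≤ v_o(1|x) + u_o(x + e_o) - u_o(x + e_j)`.
-/

lemma other_other (i : Fin 2) : other (other i) = i := by fin_cases i <;> rfl

lemma isDecision_add_e {T : ℕ} {x : Fin 2 → ℕ} (h : 1 < supply T x) (i : Fin 2) :
    IsDecision T (x + e i) := by
  unfold supply at h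
  fin_cases i <;> simp [IsDecision, e] <;> omega

lemma val_add_e_other (v : Fin 2 → ℕ → ℝ) (j : Fin 2) (k : ℕ) (x : Fin 2 → ℕ) :
    val v (other j) k (x + e j) = val v (other j) k x := by
  simp [_root_.val, e, Pi.single_eq_of_ne (other_ne j)]

namespace Equilibrium

variable {T : ℕ} {v : Fin 2 → ℕ → ℝ} {π : Fin 2 → (Fin 2 → ℕ) → ℝ}
  (E : Equilibrium T v π) {x : Fin 2 → ℕ}

lemma q_mem_Icc (hπ : TieBreaking T π) (hx : IsDecision T x) (i : Fin 2) :
    E.q i x ∈ Set.Icc 0 1 := by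
  rcases lt_trichotomy (E.b i x) (E.b (other i) x) with h | h | h
  · simp [E.q_lose i x hx h]
  · rw [E.q_tie i x hx h]; exact (hπ x hx).1 i
  · simp [E.q_win i x hx h]

lemma b_le_val (hx : IsDecision T x) (i : Fin 2) : E.b i x ≤ val v i 1 x := by
  rw [E.bid_def i x hx]; exact min_le_left _ _

lemma b_le_marginal (hx : IsDecision T x) (i : Fin 2) :
    E.b i x ≤ val v i 1 x + E.u i (x + e i) - E.u i (x + e (other i)) := by
  rw [E.bid_def i x hx]; exact min_le_right _ _

lemma b_le_of_q_pos (hx : IsDecision T x) {j : Fin 2} (hq : 0 < E.q j x) :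
    E.b (other j) x ≤ E.b j x := by
  by_contra! h
  linarith [E.q_lose j x hx h]

lemma u_eq_of_b_lt (hx : IsDecision T x) {i : Fin 2} (h : E.b i x < E.b (other i) x) :
    E.u i x = E.u i (x + e (other i)) := by
  simp [E.u_def i x hx, E.q_lose i x hx h]

/-- When `i` bids at least as much as the opponent, `u_i(x)` is a convex combination of the
losing continuation and the winning payoff, and no overbidding puts the former below the latter. -/
lemma u_mem_Icc_of_b_le (hπ : TieBreaking T π) (hx : IsDecision T x) {i : Fin 2}
    (h : E.b (other i) x ≤ E.b i x) :
    E.u i x ∈ Set.Icc (E.u i (x + e (other i)))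
      (val v i 1 x - E.b (other i) x + E.u i (x + e i)) := by
  obtain ⟨hq0, hq1⟩ := E.q_mem_Icc hπ hx i
  have hlose_le_win := E.b_le_marginal hx i
  rw [E.u_def i x hx]
  constructor <;> nlinarith

lemma u_add_e_other_le (hπ : TieBreaking T π) (hx : IsDecision T x) (i : Fin 2) :
    E.u i (x + e (other i)) ≤ E.u i x := by
  rcases le_or_gt (E.b (other i) x) (E.b i x) with h | h
  · exact (E.u_mem_Icc_of_b_le hπ hx h).1
  · exact (E.u_eq_of_b_lt hx h).ge

lemma price_le_b (x : Fin 2 → ℕ) (i : Fin 2) : price E x ≤ E.b i x := by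
  fin_cases i
  · exact min_le_left _ _
  · exact min_le_right _ _

lemma price_eq_b_other (x : Fin 2 → ℕ) {j : Fin 2} (h : E.b (other j) x ≤ E.b j x) :
    price E x = E.b (other j) x := by
  fin_cases j
  · exact min_eq_right h
  · exact min_eq_left h

lemma price_le_marginal (hπ : TieBreaking T π) (hx : IsDecision T x) (i : Fin 2) :
    price E x ≤ val v i 1 x + E.u i (x + e i) - E.u i x := by
  rcases le_or_gt (E.b (other i) x) (E.b i x) with h | h
  · linarith [(E.u_mem_Icc_of_b_le hπ hx h).2, E.price_le_b x (other i)]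
  · linarith [E.u_eq_of_b_lt hx h, E.b_le_marginal hx i, E.price_le_b x i]

end Equilibrium

theorem stmt11_general (T : ℕ) (v : Fin 2 → ℕ → ℝ) (π : Fin 2 → (Fin 2 → ℕ) → ℝ)
    (hπ : TieBreaking T π) (E : Equilibrium T v π)
    (x : Fin 2 → ℕ) (hx : IsDecision T x) (ht : 1 < supply T x)
    (j : Fin 2) (hq : 0 < E.q j x) :
    price E (x + e j) ≤ price E x := by
  set o := other j
  have hval : val v o 1 (x + e j) = val v o 1 x := val_add_e_other v j 1 x
  rw [E.price_eq_b_other x (E.b_le_of_q_pos hx hq), E.bid_def o x hx, other_other]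
  apply le_min
  · calc price E (x + e j) ≤ E.b o (x + e j) := E.price_le_b _ o
      _ ≤ val v o 1 (x + e j) := E.b_le_val (isDecision_add_e ht j) o
      _ = val v o 1 x := hval
  · have hmarginal := E.price_le_marginal hπ (isDecision_add_e ht j) o
    have hmono := E.u_add_e_other_le hπ (isDecision_add_e ht o) o
    rw [other_other, add_right_comm] at hmono
    linarith

/-- Declining price anomaly: prices are non-increasing along any realised
equilibrium path of the no-overbidding equilibrium. -/
theorem stmt11 (T : ℕ) (v : Fin 2 → ℕ → ℝ) (π : Fin 2 → (Fin 2 → ℕ) → ℝ)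
    (hv : Admissible v) (hπ : TieBreaking T π) (E : Equilibrium T v π)
    (x : Fin 2 → ℕ) (hx : IsDecision T x) (ht : 1 < supply T x)
    (j : Fin 2) (hq : 0 < E.q j x) :
    price E (x + e j) ≤ price E x :=
  stmt11_general T v π hπ E x hx ht j hq
end
end
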